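/- arXiv:2102.07254 — 3 statements merged into one kernel-verified Lean document; each statement's English description precedes it below -/
import Mathlib

section
/- Suppose ε ≤ Δ_min/(2m), where Δ_min = min{Δ_x(θ) : x ∈ X, Δ_x(θ) > 0}. Then for every x ∈ X with Δ_x(θ) > 0, one has Δ_x(θ^ε) ≥ Δ_min/2 and Δ_x(θ) ≤ Δ_x(θ^ε)(1 + 4mε/Δ_min) and Δ_x(θ^ε) ≤ Δ_x(θ)(1 + 2mε/Δ_min). -/
open Finset

noncomputable def dot {d : ℕ} (a b : Fin d → ℝ) : ℝ := ∑ i, a i * b i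

noncomputable def gap {d : ℕ} (X : Finset (Fin d → ℝ)) (hX : X.Nonempty)
    (lam x : Fin d → ℝ) : ℝ := X.sup' hX (fun y => dot lam y) - dot lam x

noncomputable def discretize {d : ℕ} (θ : Fin d → ℝ) (ε : ℝ) : Fin d → ℝ :=
  fun i => ε * ⌈θ i / ε⌉

lemma dot_lb {d : ℕ} (θ : Fin d → ℝ) (ε : ℝ) (hε : 0 < ε)
    (x : Fin d → ℝ) (hx : ∀ i, x i = 0 ∨ x i = 1) :
    dot θ x ≤ dot (discretize θ ε) x := by
  apply Finset.sum_le_sum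
  intro i _
  rcases hx i with h | h
  · simp [h]
  · simp only [h, mul_one, discretize]
    have := Int.le_ceil (θ i / ε)
    calc θ i = ε * (θ i / ε) := by field_simp
    _ ≤ ε * ⌈θ i / ε⌉ := by nlinarith

lemma dot_ub {d : ℕ} (θ : Fin d → ℝ) (ε : ℝ) (hε : 0 < ε)
    (x : Fin d → ℝ) (hx : ∀ i, x i = 0 ∨ x i = 1) :
    dot (discretize θ ε) x ≤ dot θ x + ε * ∑ i, x i := by
  unfold dot
  rw [Finset.mul_sum, ← Finset.sum_add_distrib]
  apply Finset.sum_le_sum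
  intro i _
  rcases hx i with h | h
  · simp [h]
  · simp only [h, mul_one, discretize]
    have := (Int.ceil_lt_add_one (θ i / ε)).le
    have : ε * ⌈θ i / ε⌉ ≤ ε * (θ i / ε + 1) := by nlinarith
    calc ε * ⌈θ i / ε⌉ ≤ ε * (θ i / ε + 1) := this
    _ = θ i + ε := by field_simp

theorem stmt2 {d : ℕ} (θ : Fin d → ℝ) (ε : ℝ) (hε : 0 < ε)
    (X : Finset (Fin d → ℝ)) (hX : X.Nonempty)
    (hbin : ∀ x ∈ X, ∀ i, x i = 0 ∨ x i = 1)
    (m : ℝ) (hm : ∀ x ∈ X, (∑ i, x i) ≤ m) (hm' : ∃ x ∈ X, (∑ i, x i) = m)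
    (Dmin : ℝ) (hDminpos : 0 < Dmin)
    (hDminle : ∀ x ∈ X, 0 < gap X hX θ x → Dmin ≤ gap X hX θ x)
    (hDminmem : ∃ x ∈ X, gap X hX θ x = Dmin)
    (hεsmall : ε ≤ Dmin / (2 * m)) :
    ∀ x ∈ X, 0 < gap X hX θ x →
      Dmin / 2 ≤ gap X hX (discretize θ ε) x ∧
      gap X hX θ x ≤ gap X hX (discretize θ ε) x * (1 + 4 * m * ε / Dmin) ∧
      gap X hX (discretize θ ε) x ≤ gap X hX θ x * (1 + 2 * m * ε / Dmin) := by
  -- m > 0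
  have hm0 : 0 ≤ m := by
    obtain ⟨x0, hx0, hx0m⟩ := hm'
    rw [← hx0m]
    apply Finset.sum_nonneg
    intro i _
    rcases hbin x0 hx0 i with h | h <;> simp [h]
  have hmpos : 0 < m := by
    rcases lt_or_eq_of_le hm0 with h | h
    · exact h
    · exfalso; rw [← h] at hεsmall; simp at hεsmall; linarith
  -- 2 m ε ≤ Dmin
  have h2me : 2 * m * ε ≤ Dmin := by
    have := (le_div_iff₀ (by positivity : (0:ℝ) < 2 * m)).mp hεsmall
    nlinarith
  -- dot bounds for members
  have hdlb : ∀ y ∈ X, dot θ y ≤ dot (discretize θ ε) y := fun y hy =>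
    dot_lb θ ε hε y (hbin y hy)
  have hdub : ∀ y ∈ X, dot (discretize θ ε) y ≤ dot θ y + m * ε := by
    intro y hy
    have := dot_ub θ ε hε y (hbin y hy)
    have h2 : ε * ∑ i, y i ≤ ε * m := mul_le_mul_of_nonneg_left (hm y hy) hε.le
    nlinarith
  -- sup bounds
  have hslb : X.sup' hX (fun y => dot θ y) ≤ X.sup' hX (fun y => dot (discretize θ ε) y) := by
    apply Finset.sup'_le
    intro y hy
    exact le_trans (hdlb y hy) (Finset.le_sup' _ hy)
  have hsub : X.sup' hX (fun y => dot (discretize θ ε) y) ≤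
      X.sup' hX (fun y => dot θ y) + m * ε := by
    apply Finset.sup'_le
    intro y hy
    exact le_trans (hdub y hy) (by gcongr; exact Finset.le_sup' _ hy)
  intro x hx hgap
  have hDle : Dmin ≤ gap X hX θ x := hDminle x hx hgap
  -- gap bounds
  have hg1 : gap X hX θ x - m * ε ≤ gap X hX (discretize θ ε) x := by
    have := hdub x hx
    unfold gap at *
    linarith [hslb]
  have hg2 : gap X hX (discretize θ ε) x ≤ gap X hX θ x + m * ε := by
    have := hdlb x hx
    unfold gap at *
    linarith [hsub]
  have hme : m * ε ≤ Dmin / 2 := by linarith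
  refine ⟨by linarith, ?_, ?_⟩
  · have hg' : Dmin / 2 ≤ gap X hX (discretize θ ε) x := by linarith
    have : m * ε ≤ gap X hX (discretize θ ε) x * (4 * m * ε / Dmin) := by
      calc m * ε = (Dmin / 2) * (2 * (m * ε) / Dmin) := by field_simp
      _ ≤ gap X hX (discretize θ ε) x * (4 * m * ε / Dmin) := by
          apply mul_le_mul hg' _ (by positivity) (by linarith)
          rw [div_le_div_iff₀ hDminpos hDminpos]; nlinarith
    nlinarith [hg1]
  · have : m * ε ≤ gap X hX θ x * (2 * m * ε / Dmin) := by
      calc m * ε = Dmin * (m * ε / Dmin) := by field_simp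
      _ ≤ gap X hX θ x * (2 * m * ε / Dmin) := by
          apply mul_le_mul hDle _ (by positivity) (by linarith)
          rw [div_le_div_iff₀ hDminpos hDminpos]; nlinarith
    nlinarith [hg2]
end

section
/- Suppose that for every i in a subset I ⊆ {1,...,d}, there exists x^i ∈ X with x^i_i = 1, and that a vector α ∈ R^X_+ satisfies Σ_{j∈I} x_j / (Σ_{y∈X} y_j α_y) ≤ Δ_x² for all x ∈ X. Then with w = Σ_{y∈X} y α_y, we have w_i ≥ 1/Δ_max² ≥ 1/(m‖θ‖_∞)² for all i ∈ I, where Δ_max = max_x Δ_x and m = max_x 1ᵀx. -/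
open Finset

theorem stmt8 {d : ℕ} (X : Finset (Fin d → ℝ)) (hX : X.Nonempty)
    (hbin : ∀ x ∈ X, ∀ i, x i = 0 ∨ x i = 1)
    (I : Finset (Fin d))
    (θ : Fin d → ℝ) (hθ : ∀ i, 0 ≤ θ i)
    (m tInf : ℝ) (hm : ∀ x ∈ X, (∑ i, x i) ≤ m) (hm' : ∃ x ∈ X, (∑ i, x i) = m)
    (htInf : ∀ i, |θ i| ≤ tInf) (htInf' : ∃ i, |θ i| = tInf)
    (Dmax : ℝ) (hDmaxpos : 0 < Dmax)
    (hDmax : ∀ x ∈ X, gap X hX θ x ≤ Dmax) (hDmax' : ∃ x ∈ X, gap X hX θ x = Dmax)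
    (hcov : ∀ i ∈ I, ∃ x ∈ X, x i = 1)
    (α : (Fin d → ℝ) → ℝ) (hα : ∀ x ∈ X, 0 ≤ α x)
    (hpos : ∀ j ∈ I, 0 < ∑ y ∈ X, y j * α y)
    (hfeas : ∀ x ∈ X,
      (∑ j ∈ I, x j / ∑ y ∈ X, y j * α y) ≤ (gap X hX θ x) ^ 2) :
    ∀ i ∈ I, 1 / (m * tInf) ^ 2 ≤ 1 / Dmax ^ 2 ∧
      1 / Dmax ^ 2 ≤ ∑ y ∈ X, y i * α y := by
  have htnn : 0 ≤ tInf := by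
    obtain ⟨i, hi⟩ := htInf'
    exact hi ▸ abs_nonneg _
  -- Dmax ≤ m * tInf
  have hDle : Dmax ≤ m * tInf := by
    obtain ⟨x, hxX, hgx⟩ := hDmax'
    have hdotnn : 0 ≤ dot θ x := by
      apply Finset.sum_nonneg
      intro j _
      have := hbin x hxX j
      rcases this with h | h <;> simp [h, hθ j]
    have hsup : X.sup' hX (fun y => dot θ y) ≤ m * tInf := by
      apply Finset.sup'_le
      intro y hyX
      have : dot θ y ≤ tInf * ∑ j, y j := by
        rw [Finset.mul_sum]
        apply Finset.sum_le_sum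
        intro j _
        rcases hbin y hyX j with h | h
        · simp [h]
        · simp [h]
          exact (le_abs_self _).trans (htInf j)
      calc dot θ y ≤ tInf * ∑ j, y j := this
        _ ≤ tInf * m := mul_le_mul_of_nonneg_left (hm y hyX) htnn
        _ = m * tInf := mul_comm _ _
    calc Dmax = X.sup' hX (fun y => dot θ y) - dot θ x := hgx.symm
      _ ≤ X.sup' hX (fun y => dot θ y) := by linarith
      _ ≤ m * tInf := hsup
  intro i hi
  constructor
  · apply one_div_le_one_div_of_le (by positivity)
    have := hDmaxpos.le
    nlinarith
  · obtain ⟨x, hxX, hxi⟩ := hcov i hi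
    have hwi := hpos i hi
    have hkey : 1 / (∑ y ∈ X, y i * α y) ≤ Dmax ^ 2 := by
      have h1 : x i / (∑ y ∈ X, y i * α y) ≤ ∑ j ∈ I, x j / ∑ y ∈ X, y j * α y := by
        apply Finset.single_le_sum (f := fun j => x j / ∑ y ∈ X, y j * α y) _ hi
        intro j hj
        apply div_nonneg _ (hpos j hj).le
        rcases hbin x hxX j with h | h <;> simp [h]
      have h2 := hfeas x hxX
      have h3 : (gap X hX θ x) ^ 2 ≤ Dmax ^ 2 := by
        have hg := hDmax x hxX
        have : -Dmax ≤ gap X hX θ x := by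
          have hg0 : 0 ≤ gap X hX θ x := by
            unfold gap
            have := Finset.le_sup' (fun y => dot θ y) hxX
            linarith
          linarith
        nlinarith
      rw [hxi] at h1
      linarith
    rw [div_le_iff₀ hwi] at hkey
    rw [div_le_iff₀ (by positivity : (0:ℝ) < Dmax ^ 2)]
    nlinarith
end

section
/- Assume the covering property: for each i ∈ I there exists x^i ∈ X with x^i_i = 1. Then the vector w defined by w = Σ_{i∈I} (m/Δ_min²) x^i satisfies Σ_{i∈I} x_i / w_i ≤ Δ_x² for every x ∈ X, i.e., w is feasible for the reduced Graves-Lai problem. -/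
open Finset

theorem stmt9 {d : ℕ} (X : Finset (Fin d → ℝ)) (hX : X.Nonempty)
    (hbin : ∀ x ∈ X, ∀ i, x i = 0 ∨ x i = 1)
    (I : Finset (Fin d)) (θ : Fin d → ℝ)
    -- I consists of items that appear in no optimal decision
    (hI : ∀ i ∈ I, ∀ x ∈ X, x i = 1 → 0 < gap X hX θ x)
    (m : ℝ) (hmpos : 0 < m)
    (hm : ∀ x ∈ X, (∑ i, x i) ≤ m) (hm' : ∃ x ∈ X, (∑ i, x i) = m)
    (Dmin : ℝ) (hDminpos : 0 < Dmin)
    (hDminle : ∀ x ∈ X, 0 < gap X hX θ x → Dmin ≤ gap X hX θ x)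
    (hDminmem : ∃ x ∈ X, gap X hX θ x = Dmin)
    -- covering: for each i ∈ I a decision xc i ∈ X with (xc i) i = 1
    (xc : Fin d → (Fin d → ℝ))
    (hxc : ∀ i ∈ I, xc i ∈ X ∧ xc i i = 1) :
    ∀ x ∈ X,
      (∑ i ∈ I, x i / (∑ j ∈ I, (m / Dmin ^ 2) * xc j i)) ≤ (gap X hX θ x) ^ 2 := by
  intro x hx
  by_cases hex : ∃ i ∈ I, x i = 1
  · obtain ⟨i0, hi0I, hi0⟩ := hex
    have hgap : 0 < gap X hX θ x := hI i0 hi0I x hx hi0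
    have hD : Dmin ≤ gap X hX θ x := hDminle x hx hgap
    have hD2 : Dmin ^ 2 ≤ gap X hX θ x ^ 2 := pow_le_pow_left₀ hDminpos.le hD 2
    refine le_trans ?_ hD2
    have key : ∀ i ∈ I, x i / (∑ j ∈ I, (m / Dmin ^ 2) * xc j i) ≤ x i * (Dmin ^ 2 / m) := by
      intro i hi
      rcases hbin x hx i with h0 | h1
      · simp [h0]
      · rw [h1, one_mul, one_div]
        have hw : m / Dmin ^ 2 ≤ ∑ j ∈ I, (m / Dmin ^ 2) * xc j i := by
          have hterm : (m / Dmin ^ 2) * xc i i = m / Dmin ^ 2 := by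
            rw [(hxc i hi).2, mul_one]
          calc m / Dmin ^ 2 = (m / Dmin ^ 2) * xc i i := hterm.symm
            _ ≤ ∑ j ∈ I, (m / Dmin ^ 2) * xc j i := by
                refine Finset.single_le_sum (f := fun j => (m / Dmin ^ 2) * xc j i) ?_ hi
                intro j hj
                rcases hbin (xc j) (hxc j hj).1 i with h | h <;> simp [h] <;> positivity
        have hpos : 0 < m / Dmin ^ 2 := by positivity
        calc (∑ j ∈ I, (m / Dmin ^ 2) * xc j i)⁻¹ ≤ (m / Dmin ^ 2)⁻¹ :=
              inv_anti₀ hpos hw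
          _ = Dmin ^ 2 / m := by field_simp
    calc ∑ i ∈ I, x i / (∑ j ∈ I, (m / Dmin ^ 2) * xc j i)
        ≤ ∑ i ∈ I, x i * (Dmin ^ 2 / m) := Finset.sum_le_sum key
      _ = (∑ i ∈ I, x i) * (Dmin ^ 2 / m) := by rw [Finset.sum_mul]
      _ ≤ (∑ i, x i) * (Dmin ^ 2 / m) := by
          refine mul_le_mul_of_nonneg_right ?_ (by positivity)
          refine Finset.sum_le_sum_of_subset_of_nonneg (Finset.subset_univ I) ?_
          intro i _ _
          rcases hbin x hx i with h | h <;> simp [h]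
      _ ≤ m * (Dmin ^ 2 / m) := mul_le_mul_of_nonneg_right (hm x hx) (by positivity)
      _ = Dmin ^ 2 := by field_simp
  · push_neg at hex
    have hz : ∑ i ∈ I, x i / (∑ j ∈ I, (m / Dmin ^ 2) * xc j i) = 0 := by
      refine Finset.sum_eq_zero fun i hi => ?_
      rcases hbin x hx i with h | h
      · simp [h]
      · exact absurd h (hex i hi)
    rw [hz]; exact sq_nonneg _
end
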